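/- Let g be a ground truth and p, q predictions of length n, and let α, β be as specified. Suppose A ∈ I_1(g), N ∈ I_0(g), p(i) = q(i) for all i ∉ A ∪ N, |I_1(p_A)| = |I_1(q_A)|, p ≡ 0 on N, and q restricted to N is the indicator function of {i*} for some i* ∈ N. Then LARM(g,p) > LARM(g,q). (LARM satisfies the Keeping User's Trust property.) -/
import Mathlib


namespace TSAD

open Finset

/-- The index domain `{1, …, n}`. -/
def dom (n : ℕ) : Finset ℕ := Finset.Icc 1 n

/-- The interval `[l, u]` represented by a pair. -/
def ivl (W : ℕ × ℕ) : Finset ℕ := Finset.Icc W.1 W.2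

/-- The positions in `A` where the binary sequence `s` takes the value `1` (`true`). -/
def ones (A : Finset ℕ) (s : ℕ → Bool) : Finset ℕ := A.filter (fun i => s i = true)

/-- `runs A s v` is the set of maximal intervals `[l, u] ⊆ A` on which `s` is constantly `v`
(maximal among intervals contained in `A`).  For `A = dom n` this is `I_v(s)`;
for `A ⊆ dom n` it is `I_v(s_A)`. -/
def runs (A : Finset ℕ) (s : ℕ → Bool) (v : Bool) : Finset (ℕ × ℕ) :=
  (A ×ˢ A).filter (fun W =>
    W.1 ≤ W.2 ∧ ivl W ⊆ A ∧ (∀ i ∈ ivl W, s i = v) ∧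
    (W.1 - 1 ∈ A → s (W.1 - 1) ≠ v) ∧ (W.2 + 1 ∈ A → s (W.2 + 1) ≠ v))

/-- Specification of the function `α` used in the (A)LARM scores: it assigns to each
restriction `p_A` a value in `[0,1)`, depends only on the restriction, strictly increases
when a single `0` of `p_A` is changed to a `1`, satisfies alarm timing, and early bias. -/
structure AlphaSpec (α : Finset ℕ → (ℕ → Bool) → ℝ) : Prop where
  mem_Ico : ∀ A p, α A p ∈ Set.Ico (0 : ℝ) 1
  restrict : ∀ A (p q : ℕ → Bool), (∀ i ∈ A, p i = q i) → α A p = α A q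
  mono : ∀ A (p q : ℕ → Bool) (i : ℕ), i ∈ A → p i = true → q i = false →
    (∀ j, j ≠ i → p j = q j) → α A q < α A p
  timing : ∀ A (p q : ℕ → Bool), (ones A p).card = (ones A q).card →
    ∀ (hp : (ones A p).Nonempty) (hq : (ones A q).Nonempty),
      (ones A p).min' hp < (ones A q).min' hq → α A q < α A p
  earlyBias : ∀ A (p q : ℕ → Bool) (i j : ℕ), i ∈ A → j ∈ A → i < j →
    p i = true → p j = false → q i = false → q j = true →
    (∀ k, k ≠ i → k ≠ j → p k = q k) → α A q < α A p

/-- Specification of the function `β` used in the (A)LARM scores: strictly increasing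
with values in `[0,1]`. -/
structure BetaSpec (β : ℕ → ℝ) : Prop where
  mem_Icc : ∀ k, β k ∈ Set.Icc (0 : ℝ) 1
  strictMono : StrictMono β

/-- The LARM score. -/
noncomputable def LARM (n : ℕ) (α : Finset ℕ → (ℕ → Bool) → ℝ) (β : ℕ → ℝ)
    (g p : ℕ → Bool) : ℝ :=
  (1 / ((runs (dom n) g true).card : ℝ)) *
    ∑ A ∈ (runs (dom n) g true).filter (fun A => 0 < (runs (ivl A) p true).card),
      (α (ivl A) p + 1) / 2 ^ ((runs (ivl A) p true).card)
  - 2 * ∑ N ∈ runs (dom n) g false, ((runs (ivl N) p true).card : ℝ)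
  - ∑ N ∈ runs (dom n) g false, β ((ones (ivl N) p).card)

/-- `I_{01}(g)`: intervals that are a maximal `0`-run immediately followed by a maximal
`1`-run. -/
def runs01 (n : ℕ) (g : ℕ → Bool) : Finset (ℕ × ℕ) :=
  ((dom n) ×ˢ (dom n)).filter (fun W =>
    ∃ b ∈ Finset.Ico W.1 W.2,
      (W.1, b) ∈ runs (dom n) g false ∧ (b + 1, W.2) ∈ runs (dom n) g true)

/-- `I_{10}(g)`: intervals that are a maximal `1`-run immediately followed by a maximal
`0`-run. -/
def runs10 (n : ℕ) (g : ℕ → Bool) : Finset (ℕ × ℕ) :=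
  ((dom n) ×ˢ (dom n)).filter (fun W =>
    ∃ b ∈ Finset.Ico W.1 W.2,
      (W.1, b) ∈ runs (dom n) g true ∧ (b + 1, W.2) ∈ runs (dom n) g false)

/-- Early alarms `EA(p,g)`. -/
def EA (n : ℕ) (p g : ℕ → Bool) : Finset (ℕ × ℕ) :=
  ((dom n) ×ˢ (dom n)).filter (fun A =>
    (∃ I ∈ runs01 n g, A ∈ runs (ivl I) p true) ∧
    (∃ i ∈ ivl A, g i = true) ∧ (∃ i ∈ ivl A, g i = false))

/-- Late alarms `LA(p,g)`. -/
def LA (n : ℕ) (p g : ℕ → Bool) : Finset (ℕ × ℕ) :=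
  ((dom n) ×ˢ (dom n)).filter (fun A =>
    (∃ I ∈ runs10 n g, A ∈ runs (ivl I) p true) ∧
    (∃ i ∈ ivl A, g i = true) ∧ (∃ i ∈ ivl A, g i = false))

/-- True false alarms `TA(p,g)`. -/
def TA (n : ℕ) (p g : ℕ → Bool) : Finset (ℕ × ℕ) :=
  (runs (dom n) p true).filter (fun A =>
    (∀ i ∈ ivl A, g i = false) ∧
    ∀ B ∈ EA n p g ∪ LA n p g, ¬ ivl A ⊆ ivl B)

/-- Detected anomalies `DA(p,g)`. -/
def DA (n : ℕ) (p g : ℕ → Bool) : Finset (ℕ × ℕ) :=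
  (runs (dom n) g true).filter (fun A =>
    ∃ B ∈ runs (dom n) p true,
      (ivl B ∩ ivl A).Nonempty ∧
      (B.1 ∈ ivl A ∨ ∀ i ∈ Finset.Ico B.1 A.1, g i = false))

/-- The ALARM score with alarm tolerance `t` (the averaged term is `0` when
`DA(p,g) = ∅`, since in Lean `0 / 0 = 0`). -/
noncomputable def ALARM (n t : ℕ) (α : Finset ℕ → (ℕ → Bool) → ℝ) (β : ℕ → ℝ)
    (g p : ℕ → Bool) : ℝ :=
  ((DA n p g).card : ℝ)
  + (∑ A ∈ DA n p g, (α (ivl A) p + 1) / 2 ^ ((runs (ivl A) p true).card)) /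
      ((DA n p g).card : ℝ)
  - β (((dom n).filter (fun i => p i = true ∧ g i = false)).card)
  - (1 / (t : ℝ)) * (((TA n p g).card : ℝ) + (3 / 2) * ((EA n p g).card : ℝ)
      + (1 / 2) * ((LA n p g).card : ℝ))

/-- Point-wise Recall. -/
noncomputable def recallPW (n : ℕ) (g p : ℕ → Bool) : ℝ :=
  (((dom n).filter (fun i => p i = true ∧ g i = true)).card : ℝ) /
    ((ones (dom n) g).card : ℝ)

/-- Point-wise F1-score. -/
noncomputable def f1PW (n : ℕ) (g p : ℕ → Bool) : ℝ :=
  2 * (((dom n).filter (fun i => p i = true ∧ g i = true)).card : ℝ) /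
    (((ones (dom n) p).card : ℝ) + ((ones (dom n) g).card : ℝ))

/-- Total length of the ground-truth anomaly windows hit by `p`. -/
def Spa (n : ℕ) (g p : ℕ → Bool) : ℕ :=
  ∑ W ∈ (runs (dom n) g true).filter (fun W => ∃ i ∈ ivl W, p i = true), (ivl W).card

/-- Point-adjusted Recall. -/
noncomputable def recallPA (n : ℕ) (g p : ℕ → Bool) : ℝ :=
  ((Spa n g p : ℝ)) / ((ones (dom n) g).card : ℝ)

/-- Point-adjusted F1-score. -/
noncomputable def f1PA (n : ℕ) (g p : ℕ → Bool) : ℝ :=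
  2 * (Spa n g p : ℝ) /
    ((Spa n g p : ℝ) + (((dom n).filter (fun i => p i = true ∧ g i = false)).card : ℝ)
      + ((ones (dom n) g).card : ℝ))

/-- Point-wise Precision. -/
noncomputable def precisionPW (n : ℕ) (g p : ℕ → Bool) : ℝ :=
  (((dom n).filter (fun i => p i = true ∧ g i = true)).card : ℝ) /
    ((ones (dom n) p).card : ℝ)

/-- Event-wise Recall. -/
noncomputable def recallEvent (n : ℕ) (g p : ℕ → Bool) : ℝ :=
  (((runs (dom n) g true).filter (fun W => ∃ i ∈ ivl W, p i = true)).card : ℝ) /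
    ((runs (dom n) g true).card : ℝ)

/-- Composite F1-score. -/
noncomputable def Fc1 (n : ℕ) (g p : ℕ → Bool) : ℝ :=
  2 * precisionPW n g p * recallEvent n g p / (precisionPW n g p + recallEvent n g p)

/-- Distance from `i` to the closest element of `S`. -/
noncomputable def minDist (i : ℕ) (S : Finset ℕ) : ℕ :=
  sInf {d : ℕ | ∃ j ∈ S, d = ((i : ℤ) - (j : ℤ)).natAbs}

/-- Temporal Distance. -/
noncomputable def TD (n : ℕ) (g p : ℕ → Bool) : ℕ :=
  ∑ i ∈ ones (dom n) g, minDist i (ones (dom n) p)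
  + ∑ i ∈ ones (dom n) p, minDist i (ones (dom n) g)

/-- The set of ground-truth anomaly windows hit by `p`. -/
def Dset (n : ℕ) (g p : ℕ → Bool) : Finset (ℕ × ℕ) :=
  (runs (dom n) g true).filter (fun W => ∃ i ∈ ivl W, p i = true)

/-- Delay of the first alarm of `p` within the window `W`. -/
noncomputable def delay (p : ℕ → Bool) (W : ℕ × ℕ) : ℕ :=
  sInf {i : ℕ | i ∈ ivl W ∧ p i = true} - W.1

/-- Average Alert Delay. -/
noncomputable def AAD (n : ℕ) (g p : ℕ → Bool) : ℝ :=
  (∑ W ∈ Dset n g p, (delay p W : ℝ)) / ((Dset n g p).card : ℝ)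



/-! ### Auxiliary lemmas for `larm_trust` -/

lemma mem_ivl {i : ℕ} {W : ℕ × ℕ} : i ∈ ivl W ↔ W.1 ≤ i ∧ i ≤ W.2 := Finset.mem_Icc

lemma mem_runs {D : Finset ℕ} {s : ℕ → Bool} {v : Bool} {W : ℕ × ℕ} :
    W ∈ runs D s v ↔ (W.1 ∈ D ∧ W.2 ∈ D) ∧ W.1 ≤ W.2 ∧ ivl W ⊆ D ∧
      (∀ i ∈ ivl W, s i = v) ∧ (W.1 - 1 ∈ D → s (W.1 - 1) ≠ v) ∧
      (W.2 + 1 ∈ D → s (W.2 + 1) ≠ v) := by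
  simp [runs, Finset.mem_filter, Finset.mem_product]

lemma runs_congr {D : Finset ℕ} {p q : ℕ → Bool} (h : ∀ i ∈ D, p i = q i) (v : Bool) :
    runs D p v = runs D q v := by
  ext W
  simp only [mem_runs]
  constructor
  · rintro ⟨h0, h1, h2, h3, h4, h5⟩
    refine ⟨h0, h1, h2, fun i hi => ?_, fun hm => ?_, fun hm => ?_⟩
    · rw [← h i (h2 hi)]; exact h3 i hi
    · rw [← h _ hm]; exact h4 hm
    · rw [← h _ hm]; exact h5 hm
  · rintro ⟨h0, h1, h2, h3, h4, h5⟩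
    refine ⟨h0, h1, h2, fun i hi => ?_, fun hm => ?_, fun hm => ?_⟩
    · rw [h i (h2 hi)]; exact h3 i hi
    · rw [h _ hm]; exact h4 hm
    · rw [h _ hm]; exact h5 hm

lemma ones_congr {D : Finset ℕ} {p q : ℕ → Bool} (h : ∀ i ∈ D, p i = q i) :
    ones D p = ones D q := by
  unfold ones
  apply Finset.filter_congr
  intro i hi
  rw [h i hi]

lemma runs_eq_of_mem {D : Finset ℕ} {s : ℕ → Bool} {v : Bool} {A B : ℕ × ℕ}
    (hA : A ∈ runs D s v) (hB : B ∈ runs D s v) {i : ℕ}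
    (hiA : i ∈ ivl A) (hiB : i ∈ ivl B) : A = B := by
  rw [mem_runs] at hA hB
  obtain ⟨-, -, hA2, hA3, hA4, hA5⟩ := hA
  obtain ⟨-, -, hB2, hB3, hB4, hB5⟩ := hB
  rw [mem_ivl] at hiA hiB
  have h1 : A.1 = B.1 := by
    rcases lt_trichotomy A.1 B.1 with h | h | h
    · exfalso
      have hmem : B.1 - 1 ∈ ivl A := mem_ivl.2 ⟨by omega, by omega⟩
      exact hB4 (hA2 hmem) (hA3 _ hmem)
    · exact h
    · exfalso
      have hmem : A.1 - 1 ∈ ivl B := mem_ivl.2 ⟨by omega, by omega⟩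
      exact hA4 (hB2 hmem) (hB3 _ hmem)
  have h2 : A.2 = B.2 := by
    rcases lt_trichotomy A.2 B.2 with h | h | h
    · exfalso
      have hmem : A.2 + 1 ∈ ivl B := mem_ivl.2 ⟨by omega, by omega⟩
      exact hA5 (hB2 hmem) (hB3 _ hmem)
    · exact h
    · exfalso
      have hmem : B.2 + 1 ∈ ivl A := mem_ivl.2 ⟨by omega, by omega⟩
      exact hB5 (hA2 hmem) (hA3 _ hmem)
  exact Prod.ext h1 h2

/-- LARM satisfies the Keeping User's Trust property (Property 6). -/
theorem larm_trust (n : ℕ) (hn : 1 ≤ n)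
    (α : Finset ℕ → (ℕ → Bool) → ℝ) (β : ℕ → ℝ)
    (hα : AlphaSpec α) (hβ : BetaSpec β)
    (g p q : ℕ → Bool) (A N : ℕ × ℕ)
    (hA : A ∈ runs (dom n) g true) (hN : N ∈ runs (dom n) g false)
    (hpq : ∀ i ∈ dom n, i ∉ ivl A ∪ ivl N → p i = q i)
    (hcard : (runs (ivl A) p true).card = (runs (ivl A) q true).card)
    (hpN : ∀ i ∈ ivl N, p i = false)
    (iStar : ℕ) (hi : iStar ∈ ivl N)
    (hqi : q iStar = true) (hqN : ∀ i ∈ ivl N, i ≠ iStar → q i = false) :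
    LARM n α β g p > LARM n α β g q := by
  classical
  obtain ⟨⟨hA1dom, hA2dom⟩, hAle, hAsub, hAall, -, -⟩ := mem_runs.1 hA
  obtain ⟨⟨hN1dom, hN2dom⟩, hNle, hNsub, hNall, -, -⟩ := mem_runs.1 hN
  -- agreement on other runs
  have hdisjAN : ∀ i, i ∈ ivl A → i ∈ ivl N → False := fun i hiA hiN => by
    have h1 := hAall i hiA
    have h2 := hNall i hiN
    rw [h1] at h2; exact Bool.noConfusion h2
  have hpqA' : ∀ A' ∈ runs (dom n) g true, A' ≠ A → ∀ i ∈ ivl A', p i = q i := by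
    intro A' hA'' hne i hi
    obtain ⟨-, -, hsub', hall', -, -⟩ := mem_runs.1 hA''
    refine hpq i (hsub' hi) ?_
    simp only [Finset.mem_union, not_or]
    constructor
    · intro hiA; exact hne (runs_eq_of_mem hA'' hA hi hiA)
    · intro hiN
      have h1 := hall' i hi
      have h2 := hNall i hiN
      rw [h1] at h2; exact Bool.noConfusion h2
  have hpqN' : ∀ N' ∈ runs (dom n) g false, N' ≠ N → ∀ i ∈ ivl N', p i = q i := by
    intro N' hN'' hne i hi
    obtain ⟨-, -, hsub', hall', -, -⟩ := mem_runs.1 hN''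
    refine hpq i (hsub' hi) ?_
    simp only [Finset.mem_union, not_or]
    constructor
    · intro hiA
      have h1 := hall' i hi
      have h2 := hAall i hiA
      rw [h1] at h2; exact Bool.noConfusion h2
    · intro hiN; exact hne (runs_eq_of_mem hN'' hN hi hiN)
  -- computations on N
  have hiN1 : 1 ≤ iStar := by
    have := hNsub hi
    simp only [dom, Finset.mem_Icc] at this
    exact this.1
  have hrunsNp : runs (ivl N) p true = ∅ := by
    refine Finset.eq_empty_iff_forall_notMem.2 fun W hW => ?_
    obtain ⟨⟨hW1, -⟩, hle, -, hall, -, -⟩ := mem_runs.1 hW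
    have h1 := hall W.1 (mem_ivl.2 ⟨le_refl _, hle⟩)
    rw [hpN W.1 hW1] at h1; exact Bool.noConfusion h1
  have honesNp : ones (ivl N) p = ∅ := by
    refine Finset.eq_empty_iff_forall_notMem.2 fun i hi' => ?_
    simp only [ones, Finset.mem_filter] at hi'
    rw [hpN i hi'.1] at hi'
    exact Bool.noConfusion hi'.2
  have hrunsNq : runs (ivl N) q true = {(iStar, iStar)} := by
    ext W
    simp only [Finset.mem_singleton, mem_runs]
    constructor
    · rintro ⟨⟨hW1, hW2⟩, hle, hsub, hall, -, -⟩
      have h1 : W.1 = iStar := by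
        by_contra h
        have h' := hall W.1 (mem_ivl.2 ⟨le_refl _, hle⟩)
        rw [hqN W.1 hW1 h] at h'; exact Bool.noConfusion h'
      have h2 : W.2 = iStar := by
        by_contra h
        have h' := hall W.2 (mem_ivl.2 ⟨hle, le_refl _⟩)
        rw [hqN W.2 hW2 h] at h'; exact Bool.noConfusion h'
      exact Prod.ext h1 h2
    · rintro rfl
      refine ⟨⟨hi, hi⟩, le_refl _, fun j hj => ?_, fun j hj => ?_, fun hm => ?_, fun hm => ?_⟩
      · rw [mem_ivl] at hj
        have : j = iStar := le_antisymm hj.2 hj.1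
        subst this; exact hi
      · rw [mem_ivl] at hj
        have : j = iStar := le_antisymm hj.2 hj.1
        subst this; exact hqi
      · rw [hqN _ hm (by omega)]; simp
      · rw [hqN _ hm (by omega)]; simp
  have honesNq : ones (ivl N) q = {iStar} := by
    ext i
    simp only [ones, Finset.mem_filter, Finset.mem_singleton]
    constructor
    · rintro ⟨hiN, hq⟩
      by_contra h
      rw [hqN i hiN h] at hq; exact Bool.noConfusion hq
    · rintro rfl; exact ⟨hi, hqi⟩
  -- the filter over 1-runs is the same for p and q
  have hruns' : ∀ A' ∈ runs (dom n) g true, A' ≠ A →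
      runs (ivl A') p true = runs (ivl A') q true :=
    fun A' hA'' hne => runs_congr (hpqA' A' hA'' hne) true
  have hα' : ∀ A' ∈ runs (dom n) g true, A' ≠ A → α (ivl A') p = α (ivl A') q :=
    fun A' hA'' hne => hα.restrict _ _ _ (hpqA' A' hA'' hne)
  have hrunsN' : ∀ N' ∈ runs (dom n) g false, N' ≠ N →
      runs (ivl N') p true = runs (ivl N') q true :=
    fun N' hN'' hne => runs_congr (hpqN' N' hN'' hne) true
  have honesN' : ∀ N' ∈ runs (dom n) g false, N' ≠ N →
      ones (ivl N') p = ones (ivl N') q :=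
    fun N' hN'' hne => ones_congr (hpqN' N' hN'' hne)
  have hFeq : (runs (dom n) g true).filter (fun A' => 0 < (runs (ivl A') q true).card)
      = (runs (dom n) g true).filter (fun A' => 0 < (runs (ivl A') p true).card) := by
    apply Finset.filter_congr
    intro A' hA''
    by_cases h : A' = A
    · subst h; rw [hcard]
    · rw [hruns' A' hA'' h]
  set F := (runs (dom n) g true).filter (fun A' => 0 < (runs (ivl A') p true).card) with hF
  -- main sum difference bound
  have hSdiff : (-1 : ℝ) <
      (∑ A' ∈ F, (α (ivl A') p + 1) / 2 ^ ((runs (ivl A') p true).card))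
      - ∑ A' ∈ F, (α (ivl A') q + 1) / 2 ^ ((runs (ivl A') q true).card) := by
    by_cases hAF : A ∈ F
    · have e1 := Finset.sum_erase_add F
        (fun A' => (α (ivl A') p + 1) / 2 ^ ((runs (ivl A') p true).card)) hAF
      have e2 := Finset.sum_erase_add F
        (fun A' => (α (ivl A') q + 1) / 2 ^ ((runs (ivl A') q true).card)) hAF
      have e3 : (∑ A' ∈ F.erase A, (α (ivl A') p + 1) / 2 ^ ((runs (ivl A') p true).card))
          = ∑ A' ∈ F.erase A, (α (ivl A') q + 1) / 2 ^ ((runs (ivl A') q true).card) := by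
        refine Finset.sum_congr rfl fun A' hA'' => ?_
        have hne := Finset.ne_of_mem_erase hA''
        have hmem1 : A' ∈ runs (dom n) g true :=
          Finset.mem_of_mem_filter _ (Finset.mem_of_mem_erase hA'')
        rw [hruns' A' hmem1 hne, hα' A' hmem1 hne]
      rw [← e1, ← e2, e3]
      have hk : (runs (ivl A) q true).card = (runs (ivl A) p true).card := hcard.symm
      simp only [hk]
      obtain ⟨hp0, hp1⟩ := hα.mem_Ico (ivl A) p
      obtain ⟨hq0, hq1⟩ := hα.mem_Ico (ivl A) q
      have h2k : (0:ℝ) < 2 ^ ((runs (ivl A) p true).card) := by positivity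
      have h2k1 : (1:ℝ) ≤ 2 ^ ((runs (ivl A) p true).card) :=
        one_le_pow₀ (by norm_num)
      have key : (-1:ℝ) < (α (ivl A) p + 1) / 2 ^ ((runs (ivl A) p true).card)
          - (α (ivl A) q + 1) / 2 ^ ((runs (ivl A) p true).card) := by
        rw [div_sub_div_same, lt_div_iff₀ h2k]
        nlinarith
      linarith [key]
    · have e3 : (∑ A' ∈ F, (α (ivl A') p + 1) / 2 ^ ((runs (ivl A') p true).card))
          = ∑ A' ∈ F, (α (ivl A') q + 1) / 2 ^ ((runs (ivl A') q true).card) := by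
        refine Finset.sum_congr rfl fun A' hA'' => ?_
        have hne : A' ≠ A := fun h => hAF (h ▸ hA'')
        have hmem1 : A' ∈ runs (dom n) g true := Finset.mem_of_mem_filter _ hA''
        rw [hruns' A' hmem1 hne, hα' A' hmem1 hne]
      rw [e3, sub_self]
      norm_num
  -- false-alarm count sums
  have hT : (∑ N' ∈ runs (dom n) g false, ((runs (ivl N') q true).card : ℝ))
      = (∑ N' ∈ runs (dom n) g false, ((runs (ivl N') p true).card : ℝ)) + 1 := by
    have e1 := Finset.sum_erase_add (runs (dom n) g false)
      (fun N' => ((runs (ivl N') q true).card : ℝ)) hN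
    have e2 := Finset.sum_erase_add (runs (dom n) g false)
      (fun N' => ((runs (ivl N') p true).card : ℝ)) hN
    have e3 : (∑ N' ∈ (runs (dom n) g false).erase N, ((runs (ivl N') q true).card : ℝ))
        = ∑ N' ∈ (runs (dom n) g false).erase N, ((runs (ivl N') p true).card : ℝ) := by
      refine Finset.sum_congr rfl fun N' hN'' => ?_
      rw [hrunsN' N' (Finset.mem_of_mem_erase hN'') (Finset.ne_of_mem_erase hN'')]
    rw [← e1, ← e2, e3]
    simp [hrunsNq, hrunsNp]
  have hU : (∑ N' ∈ runs (dom n) g false, β ((ones (ivl N') q).card))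
      = (∑ N' ∈ runs (dom n) g false, β ((ones (ivl N') p).card)) + (β 1 - β 0) := by
    have e1 := Finset.sum_erase_add (runs (dom n) g false)
      (fun N' => β ((ones (ivl N') q).card)) hN
    have e2 := Finset.sum_erase_add (runs (dom n) g false)
      (fun N' => β ((ones (ivl N') p).card)) hN
    have e3 : (∑ N' ∈ (runs (dom n) g false).erase N, β ((ones (ivl N') q).card))
        = ∑ N' ∈ (runs (dom n) g false).erase N, β ((ones (ivl N') p).card) := by
      refine Finset.sum_congr rfl fun N' hN'' => ?_
      rw [honesN' N' (Finset.mem_of_mem_erase hN'') (Finset.ne_of_mem_erase hN'')]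
    rw [← e1, ← e2, e3]
    simp only [honesNq, honesNp, Finset.card_singleton, Finset.card_empty]
    ring
  -- size of the averaging denominator
  have hm1 : (1:ℝ) ≤ ((runs (dom n) g true).card : ℝ) := by
    have : 0 < (runs (dom n) g true).card := Finset.card_pos.2 ⟨A, hA⟩
    exact_mod_cast this
  have hmpos : (0:ℝ) < ((runs (dom n) g true).card : ℝ) := by linarith
  have hinv : (1:ℝ) / ((runs (dom n) g true).card : ℝ) ≤ 1 := (div_le_one hmpos).2 hm1
  have hinvpos : (0:ℝ) < 1 / ((runs (dom n) g true).card : ℝ) := by positivity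
  have hmul := mul_lt_mul_of_pos_left hSdiff hinvpos
  have hβdiff : β 0 < β 1 := hβ.strictMono (by norm_num)
  unfold LARM
  rw [hFeq, hT, hU]
  nlinarith [hmul, hinv, hinvpos, hβdiff]


end TSAD
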